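/- arXiv:2602.19049 — 2 statements merged into one kernel-verified Lean document; each statement's English description precedes it below -/
import Mathlib

section
/- With the exponential tilting $\pi_\eta(v) \propto \pi(v)\exp(\eta \pi(v))$ (advantage equal to the probability itself), if $\pi$ is not the uniform distribution on its (full) support, then there exists $\eta_0 > 0$ such that for all $0 < \eta < \eta_0$, the entropy satisfies $H(\pi_\eta) < H(\pi)$. -/
open Finset Filter Topology

/-!
At `η = 0` the tilt `π_η` has velocity `π (A - E_π A)`, so the entropy along the tilt has
derivative `-Cov_π(A, log π)`. For `A = π` this covariance is positive: `π` and `log π` are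
comonotone, and a weighted Chebyshev sum inequality makes it strict when `π` is not constant.
A negative derivative at `0` gives the strict decrease for small `η > 0`.
-/

lemma exists_forall_lt_of_hasDerivAt_neg {f : ℝ → ℝ} {f' x : ℝ} (hf : HasDerivAt f f' x)
    (hf' : f' < 0) : ∃ δ > 0, ∀ y, x < y → y < x + δ → f y < f x := by
  have hslope : ∀ᶠ y in 𝓝[>] x, slope f x y < 0 :=
    ((hasDerivWithinAt_iff_tendsto_slope' (lt_irrefl x)).1 hf.hasDerivWithinAt).eventually
      (eventually_lt_nhds hf')
  obtain ⟨u, hxu, hsub⟩ := mem_nhdsGT_iff_exists_Ioo_subset.1 hslope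
  refine ⟨u - x, sub_pos.2 hxu, fun y hxy hyu => ?_⟩
  exact (slope_neg_iff_of_le hxy.le).1 (hsub ⟨hxy, by linarith⟩)

section Covariance

variable {ι : Type*} [Fintype ι] (p f g : ι → ℝ)

lemma two_mul_weighted_covariance_eq :
    2 * ((∑ i, p i) * ∑ i, p i * f i * g i - (∑ i, p i * f i) * ∑ i, p i * g i)
      = ∑ i, ∑ j, p i * p j * ((f i - f j) * (g i - g j)) := by
  have hexpand : ∀ i j, p i * p j * ((f i - f j) * (g i - g j))
      = p i * (p j * f j * g j) + (p i * f i * g i) * p j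
        - (p i * f i) * (p j * g j) - (p i * g i) * (p j * f j) := fun i j => by ring
  simp_rw [hexpand, sum_sub_distrib, sum_add_distrib, ← sum_mul_sum]
  ring

variable {p f g}

lemma weighted_sum_mul_sum_lt_sum_mul_sum (hp : ∀ i, 0 < p i)
    (hfg : ∀ i j, f i < f j → g i < g j) (hf : ∃ i j, f i ≠ f j) :
    (∑ i, p i * f i) * ∑ i, p i * g i < (∑ i, p i) * ∑ i, p i * f i * g i := by
  have hpos : ∀ i j, f i ≠ f j → 0 < (f i - f j) * (g i - g j) := fun i j hij => by
    rcases hij.lt_or_gt with h | h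
    · exact mul_pos_of_neg_of_neg (by linarith) (by linarith [hfg i j h])
    · exact mul_pos (by linarith) (by linarith [hfg j i h])
  have hnonneg : ∀ i j, 0 ≤ p i * p j * ((f i - f j) * (g i - g j)) := fun i j => by
    refine mul_nonneg (mul_pos (hp i) (hp j)).le ?_
    by_cases hij : f i = f j
    · simp [hij]
    · exact (hpos i j hij).le
  obtain ⟨i, j, hij⟩ := hf
  have hsum : 0 < ∑ i, ∑ j, p i * p j * ((f i - f j) * (g i - g j)) :=
    sum_pos' (fun i _ => sum_nonneg fun j _ => hnonneg i j)
      ⟨i, mem_univ _, sum_pos' (fun j _ => hnonneg i j)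
        ⟨j, mem_univ _, mul_pos (mul_pos (hp i) (hp j)) (hpos i j hij)⟩⟩
  linarith [two_mul_weighted_covariance_eq p f g]

end Covariance

section Tilt

variable {V : Type*} [Fintype V]

noncomputable def expTilt (π A : V → ℝ) (η : ℝ) (v : V) : ℝ :=
  π v * Real.exp (η * A v) / ∑ w, π w * Real.exp (η * A w)

noncomputable def entropy (μ : V → ℝ) : ℝ := ∑ v, Real.negMulLog (μ v)

variable {π : V → ℝ} (A : V → ℝ)

lemma expTilt_zero (hsum : ∑ v, π v = 1) : expTilt π A 0 = π := by
  ext v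
  simp [expTilt, hsum]

lemma hasDerivAt_expTilt_zero (hsum : ∑ v, π v = 1) (v : V) :
    HasDerivAt (fun η => expTilt π A η v) (π v * (A v - ∑ w, π w * A w)) 0 := by
  have hweight : ∀ w, HasDerivAt (fun η => π w * Real.exp (η * A w)) (π w * A w) 0 := by
    intro w
    simpa using ((hasDerivAt_mul_const (x := (0 : ℝ)) (A w)).exp).const_mul (π w)
  refine ((hweight v).fun_div (HasDerivAt.fun_sum (u := univ) fun w _ => hweight w)
    (by simp [hsum])).congr_deriv ?_
  simp only [zero_mul, Real.exp_zero, mul_one, hsum]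
  ring

lemma hasDerivAt_entropy_expTilt_zero (hpos : ∀ v, 0 < π v) (hsum : ∑ v, π v = 1) :
    HasDerivAt (fun η => entropy (expTilt π A η))
      ((∑ v, π v * A v) * (∑ v, π v * Real.log (π v)) - ∑ v, π v * A v * Real.log (π v))
      0 := by
  have hterm : ∀ v, HasDerivAt (fun η => Real.negMulLog (expTilt π A η v))
      ((-Real.log (π v) - 1) * (π v * (A v - ∑ w, π w * A w))) 0 := fun v =>
    (Real.hasDerivAt_negMulLog (hpos v).ne').comp_of_eq 0 (hasDerivAt_expTilt_zero A hsum v)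
      (congrFun (expTilt_zero A hsum) v).symm
  refine (HasDerivAt.fun_sum (u := univ) fun v _ => hterm v).congr_deriv ?_
  set m := ∑ w, π w * A w
  have hexpand : ∀ v, (-Real.log (π v) - 1) * (π v * (A v - m))
      = m * (π v * Real.log (π v)) - π v * A v * Real.log (π v) + (m * π v - π v * A v) :=
    fun v => by ring
  simp only [hexpand, sum_add_distrib, sum_sub_distrib, ← mul_sum, hsum]
  ring

end Tilt

theorem entropy_decreases_tilt_by_prob_general {V : Type*} [Fintype V]
    (π : V → ℝ) (hpos : ∀ v, 0 < π v) (hsum : ∑ v, π v = 1)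
    (hnc : ∃ v w : V, π v ≠ π w) :
    ∃ η₀ > 0, ∀ η : ℝ, 0 < η → η < η₀ →
      (-∑ v, (π v * Real.exp (η * π v) / ∑ w, π w * Real.exp (η * π w))
            * Real.log (π v * Real.exp (η * π v) / ∑ w, π w * Real.exp (η * π w)))
        < -∑ v, π v * Real.log (π v) := by
  have hcov :=
    weighted_sum_mul_sum_lt_sum_mul_sum hpos (fun v w h => Real.log_lt_log (hpos v) h) hnc
  rw [hsum, one_mul] at hcov
  obtain ⟨η₀, hη₀, hdecr⟩ := exists_forall_lt_of_hasDerivAt_neg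
    (hasDerivAt_entropy_expTilt_zero π hpos hsum) (by linarith)
  refine ⟨η₀, hη₀, fun η hη hηη₀ => ?_⟩
  have := hdecr η hη (by simpa using hηη₀)
  rw [expTilt_zero π hsum] at this
  simpa [entropy, expTilt, Real.negMulLog, sum_neg_distrib] using this

/-- Under exponential tilting with advantage `A(v) = π(v)` itself, a non-uniform
positive pmf has strictly decreased entropy for all sufficiently small `η > 0`. -/
theorem entropy_decreases_tilt_by_prob {V : Type*} [Fintype V]
    (hcard : 2 ≤ Fintype.card V)
    (π : V → ℝ) (hpos : ∀ v, 0 < π v) (hsum : ∑ v, π v = 1)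
    (hnc : ∃ v w : V, π v ≠ π w) :
    ∃ η₀ > 0, ∀ η : ℝ, 0 < η → η < η₀ →
      (-∑ v, (π v * Real.exp (η * π v) / ∑ w, π w * Real.exp (η * π w))
            * Real.log (π v * Real.exp (η * π v) / ∑ w, π w * Real.exp (η * π w)))
        < -∑ v, π v * Real.log (π v) :=
  entropy_decreases_tilt_by_prob_general π hpos hsum hnc
end

section
/- For a positive probability mass function $\pi$ on finite $V$ and advantage $A(v) = \pi(v)$, the first-order entropy change under exponential tilting is $\frac{d}{d\eta}H(\pi_\eta)\big|_{\eta=0} = -\mathrm{Cov}_\pi(\log \pi(v), \pi(v))$, and this quantity is strictly negative whenever $\pi$ is non-uniform. -/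
/-!
Along the tilt, `d/dη π_η(v) = π_η(v) (A v - E_{π_η} A)`, and these derivatives sum to zero, so
differentiating `-∑ q log q` leaves `-Cov_{π_η}(log π_η, A)`. At `η = 0` and `A = π` the sign
comes from writing the covariance as `½ ∑_{v,w} π v π w (π v - π w) (log π v - log π w)`,
a sum of nonnegative terms since `log` is strictly increasing.
-/

open Finset

noncomputable section

open Real

variable {V : Type*} [Fintype V]

def weightedCov (p f g : V → ℝ) : ℝ :=
  ∑ v, p v * (f v * g v) - (∑ v, p v * f v) * ∑ v, p v * g v

def tilt (p A : V → ℝ) (η : ℝ) (v : V) : ℝ :=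
  p v * exp (η * A v) / ∑ w, p w * exp (η * A w)

theorem weightedCov_eq_half_sum_sum {p : V → ℝ} (hp : ∑ v, p v = 1) (f g : V → ℝ) :
    weightedCov p f g = (1 / 2) * ∑ v, ∑ w, p v * p w * ((f v - f w) * (g v - g w)) := by
  have expand : ∀ v w, p v * p w * ((f v - f w) * (g v - g w)) =
      p w * (p v * (f v * g v)) - p v * f v * (p w * g w) - p w * f w * (p v * g v)
        + p v * (p w * (f w * g w)) := fun v w => by ring
  simp only [expand, sum_add_distrib, sum_sub_distrib, ← sum_mul, ← mul_sum, hp, weightedCov]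
  ring

theorem log_sub_log_mul_sub_pos {a b : ℝ} (ha : 0 < a) (hb : 0 < b) (hab : a ≠ b) :
    0 < (log a - log b) * (a - b) := by
  rcases hab.lt_or_gt with h | h
  · exact mul_pos_of_neg_of_neg (by linarith [log_lt_log ha h]) (by linarith)
  · exact mul_pos (by linarith [log_lt_log hb h]) (by linarith)

theorem log_sub_log_mul_sub_nonneg {a b : ℝ} (ha : 0 < a) (hb : 0 < b) :
    0 ≤ (log a - log b) * (a - b) := by
  rcases eq_or_ne a b with rfl | hab
  · simp
  · exact (log_sub_log_mul_sub_pos ha hb hab).le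

theorem weightedCov_log_pos {p f : V → ℝ} (hp : ∀ v, 0 < p v) (hp1 : ∑ v, p v = 1)
    (hf : ∀ v, 0 < f v) (hnc : ∃ v w, f v ≠ f w) :
    0 < weightedCov p (fun v => log (f v)) f := by
  obtain ⟨v₀, w₀, hne⟩ := hnc
  have hterm : ∀ v w, 0 ≤ p v * p w * ((log (f v) - log (f w)) * (f v - f w)) := fun v w =>
    mul_nonneg (mul_pos (hp v) (hp w)).le (log_sub_log_mul_sub_nonneg (hf v) (hf w))
  rw [weightedCov_eq_half_sum_sum hp1]
  refine mul_pos one_half_pos (sum_pos' (fun v _ => sum_nonneg fun w _ => hterm v w)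
    ⟨v₀, mem_univ _, sum_pos' (fun w _ => hterm v₀ w) ⟨w₀, mem_univ _, ?_⟩⟩)
  exact mul_pos (mul_pos (hp v₀) (hp w₀)) (log_sub_log_mul_sub_pos (hf v₀) (hf w₀) hne)

theorem sum_tilt_weights_pos [Nonempty V] {p : V → ℝ} (hp : ∀ v, 0 < p v) (A : V → ℝ)
    (η : ℝ) : 0 < ∑ w, p w * exp (η * A w) :=
  sum_pos (fun w _ => mul_pos (hp w) (exp_pos _)) univ_nonempty

theorem tilt_pos {p : V → ℝ} (hp : ∀ v, 0 < p v) (A : V → ℝ) (η : ℝ) (v : V) :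
    0 < tilt p A η v :=
  have : Nonempty V := ⟨v⟩
  div_pos (mul_pos (hp v) (exp_pos _)) (sum_tilt_weights_pos hp A η)

theorem sum_tilt [Nonempty V] {p : V → ℝ} (hp : ∀ v, 0 < p v) (A : V → ℝ) (η : ℝ) :
    ∑ v, tilt p A η v = 1 := by
  simp only [tilt, ← sum_div, div_self (sum_tilt_weights_pos hp A η).ne']

theorem tilt_zero {p : V → ℝ} (hp : ∑ v, p v = 1) (A : V → ℝ) : tilt p A 0 = p := by
  ext v
  simp [tilt, hp]

theorem hasDerivAt_tilt {p : V → ℝ} (hp : ∀ v, 0 < p v) (A : V → ℝ) (η : ℝ) (v : V) :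
    HasDerivAt (fun η => tilt p A η v)
      (tilt p A η v * (A v - ∑ w, tilt p A η w * A w)) η := by
  have hN : ∀ w, HasDerivAt (fun η => p w * exp (η * A w)) (p w * exp (η * A w) * A w) η :=
    fun w => by simpa [mul_assoc] using ((hasDerivAt_mul_const (A w)).exp).const_mul (p w)
  have : Nonempty V := ⟨v⟩
  have hZ := sum_tilt_weights_pos hp A η
  refine ((hN v).div (HasDerivAt.fun_sum fun w _ => hN w) hZ.ne').congr_deriv ?_
  simp only [tilt, div_mul_eq_mul_div, ← sum_div]
  field_simp

theorem hasDerivAt_entropy_tilt [Nonempty V] {p : V → ℝ} (hp : ∀ v, 0 < p v) (A : V → ℝ)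
    (η : ℝ) :
    HasDerivAt (fun η => -∑ v, tilt p A η v * log (tilt p A η v))
      (-weightedCov (tilt p A η) (fun v => log (tilt p A η v)) A) η := by
  set q := tilt p A η
  have hterm : ∀ v, HasDerivAt (fun η => tilt p A η v * log (tilt p A η v))
      ((log (q v) + 1) * (q v * (A v - ∑ w, q w * A w))) η := fun v =>
    (hasDerivAt_mul_log (tilt_pos hp A η v).ne').comp (h₂ := fun x => x * log x) η
      (hasDerivAt_tilt hp A η v)
  refine (HasDerivAt.fun_sum fun v _ => hterm v).fun_neg.congr_deriv ?_
  have expand : ∀ v, (log (q v) + 1) * (q v * (A v - ∑ w, q w * A w)) =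
      q v * (log (q v) * A v) - q v * log (q v) * ∑ w, q w * A w
        + (q v * A v - q v * ∑ w, q w * A w) := fun v => by ring
  simp only [expand, sum_add_distrib, sum_sub_distrib, ← sum_mul, sum_tilt hp, weightedCov, q]
  ring

end

theorem entropy_deriv_tilt_by_prob_general {V : Type*} [Fintype V]
    (π : V → ℝ) (hpos : ∀ v, 0 < π v) (hsum : ∑ v, π v = 1)
    (hnc : ∃ v w : V, π v ≠ π w) :
    HasDerivAt
      (fun η : ℝ =>
        -∑ v, (π v * Real.exp (η * π v) / ∑ w, π w * Real.exp (η * π w))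
              * Real.log (π v * Real.exp (η * π v) / ∑ w, π w * Real.exp (η * π w)))
      (-((∑ v, π v * (Real.log (π v) * π v))
          - (∑ v, π v * π v) * (∑ v, π v * Real.log (π v)))) 0
    ∧ -((∑ v, π v * (Real.log (π v) * π v))
        - (∑ v, π v * π v) * (∑ v, π v * Real.log (π v))) < 0 := by
  have : Nonempty V := let ⟨v, _⟩ := hnc; ⟨v⟩
  have hderiv := hasDerivAt_entropy_tilt hpos π 0
  have hcov := weightedCov_log_pos hpos hsum hpos hnc
  rw [tilt_zero hsum] at hderiv
  rw [weightedCov, mul_comm (∑ v, π v * Real.log (π v))] at hcov hderiv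
  exact ⟨hderiv, neg_neg_of_pos hcov⟩

/-- With advantage `A(v) = π(v)`, the first-order entropy change under
exponential tilting is `-Cov_π(log π, π)`, and this is strictly negative
whenever `π` is non-uniform. -/
theorem entropy_deriv_tilt_by_prob {V : Type*} [Fintype V]
    (hcard : 2 ≤ Fintype.card V)
    (π : V → ℝ) (hpos : ∀ v, 0 < π v) (hsum : ∑ v, π v = 1)
    (hnc : ∃ v w : V, π v ≠ π w) :
    HasDerivAt
      (fun η : ℝ =>
        -∑ v, (π v * Real.exp (η * π v) / ∑ w, π w * Real.exp (η * π w))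
              * Real.log (π v * Real.exp (η * π v) / ∑ w, π w * Real.exp (η * π w)))
      (-((∑ v, π v * (Real.log (π v) * π v))
          - (∑ v, π v * π v) * (∑ v, π v * Real.log (π v)))) 0
    ∧ -((∑ v, π v * (Real.log (π v) * π v))
        - (∑ v, π v * π v) * (∑ v, π v * Real.log (π v))) < 0 :=
  entropy_deriv_tilt_by_prob_general π hpos hsum hnc
end
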